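/- Let n >= 3 be an integer and let alpha, beta be real numbers with alpha + n*beta = 1, 3 + 8*n*beta != 0 and 128*alpha^2 + 200*alpha - 67 != 0; set tau = 8*beta/(3 + 8*n*beta) and omega_3 = -48*beta/(128*alpha^2 + 200*alpha - 67). Let S be the (6n+1) x (3n+1) real matrix and L the (3n+1) x (6n+1) real matrix with the bordered block-circulant structure described in the context, and let A = L*S. Then there exists a row vector omega in R^{3n+1} whose entry at index 0 equals 1 - 25*n*omega_3, whose three entries on each sector are (at the same within-sector positions for every sector) the values 32*omega_3, omega_3 and -8*omega_3, and which satisfies omega * A = e_0 (the first standard basis row vector of R^{3n+1}). -/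

import Mathlib

/-!
`loopSMat` and `loopLMat` are bordered block-circulant matrices over the rotation group `ZMod n`.
Such a matrix maps vectors that are constant across the sectors to vectors of the same kind,
acting on them through the reduced matrix `[[a, r], [n • c, B₀ + B₁ + B₂]]`, its zero-frequency
Fourier block; this needs the shifts `0, ±1` to be distinct, i.e. `3 ≤ n`. The proposed weights
are constant across sectors, so `ω * L * S = e₀` reduces to a product of a `4 × 7` and a `7 × 4`
matrix, and is an identity in `α, β` once the denominators `3 + 8nβ` and `128α² + 200α - 67` are
cleared.
-/

open Matrix

noncomputable section

/-- Central block of the Loop local subdivision matrix. -/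
def loopS0 : Matrix (Fin 6) (Fin 3) ℝ :=
  (1/16 : ℝ) • !![6,0,0; 10,1,1; 6,6,2; 6,0,2; 6,2,6; 2,0,6]

/-- Block of the Loop local subdivision matrix for sector `k + 1`. -/
def loopS1 : Matrix (Fin 6) (Fin 3) ℝ :=
  (1/16 : ℝ) • !![2,0,0; 1,0,0; 0,0,0; 6,0,0; 2,0,0; 6,2,0]

/-- Block of the Loop local subdivision matrix for sector `k - 1`. -/
def loopS2 : Matrix (Fin 6) (Fin 3) ℝ :=
  (1/16 : ℝ) • !![2,0,0; 1,0,1; 0,0,2; 0,0,0; 0,0,0; 0,0,0]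

/-- Column-0 entries of the sector rows of the Loop local subdivision matrix. -/
def loopSCol0 : Fin 6 → ℝ := (1/16 : ℝ) • ![6,1,0,2,0,0]

/-- Central block of the Loop position (limit-mask) matrix. -/
def loopL0 : Matrix (Fin 3) (Fin 6) ℝ :=
  ((1/12 : ℝ) • (!![6,1,1; 1,6,1; 0,1,0; 1,1,6; 0,1,1; 0,0,1] :
    Matrix (Fin 6) (Fin 3) ℝ))ᵀ

/-- Block of the Loop position matrix for sector `k + 1`. -/
def loopL1 : Matrix (Fin 3) (Fin 6) ℝ :=
  ((1/12 : ℝ) • (!![1,0,1; 0,0,1; 0,0,0; 0,0,0; 0,0,0; 0,0,0] :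
    Matrix (Fin 6) (Fin 3) ℝ))ᵀ

/-- Block of the Loop position matrix for sector `k - 1`. -/
def loopL2 : Matrix (Fin 3) (Fin 6) ℝ :=
  ((1/12 : ℝ) • (!![1,0,0; 0,0,0; 0,0,0; 1,1,0; 0,0,0; 0,1,0] :
    Matrix (Fin 6) (Fin 3) ℝ))ᵀ

/-- Column-0 entries of the sector rows of the Loop position matrix. -/
def loopLCol0 : Fin 3 → ℝ := (1/12 : ℝ) • ![1,0,0]

/-- The `(6n+1) × (3n+1)` bordered block-circulant Loop local subdivision
matrix `S` at a vertex of valence `n`, with vertex-rule weights `α` and `β`.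
Rows/columns are indexed by a center index (`Sum.inl ()`) followed by `n`
cyclic sectors of size `6` (rows) resp. `3` (columns). -/
def loopSMat (n : ℕ) [NeZero n] (α β : ℝ) :
    Matrix (Unit ⊕ ZMod n × Fin 6) (Unit ⊕ ZMod n × Fin 3) ℝ :=
  Matrix.of fun r c =>
    match r, c with
    | Sum.inl _, Sum.inl _ => α
    | Sum.inl _, Sum.inr (_, j) => if j = 0 then β else 0
    | Sum.inr (_, i), Sum.inl _ => loopSCol0 i
    | Sum.inr (k, i), Sum.inr (m, j) =>
        if m = k then loopS0 i j
        else if m = k + 1 then loopS1 i j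
        else if m = k - 1 then loopS2 i j
        else 0

/-- The `(3n+1) × (6n+1)` bordered block-circulant Loop position (limit-mask)
matrix `L` at a vertex of valence `n`, with limit-mask weight `τ`. -/
def loopLMat (n : ℕ) [NeZero n] (τ : ℝ) :
    Matrix (Unit ⊕ ZMod n × Fin 3) (Unit ⊕ ZMod n × Fin 6) ℝ :=
  Matrix.of fun r c =>
    match r, c with
    | Sum.inl _, Sum.inl _ => 1 - n * τ
    | Sum.inl _, Sum.inr (_, j) => if j = 0 then τ else 0
    | Sum.inr (_, i), Sum.inl _ => loopLCol0 i
    | Sum.inr (k, i), Sum.inr (m, j) =>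
        if m = k then loopL0 i j
        else if m = k + 1 then loopL1 i j
        else if m = k - 1 then loopL2 i j
        else 0

theorem ZMod.sum_ite_eq_add_add {M : Type*} [AddCommMonoid M] {n : ℕ} [NeZero n] (hn : 3 ≤ n)
    (m : ZMod n) (x y z : M) :
    (∑ k : ZMod n, if m = k then x else if m = k + 1 then y else if m = k - 1 then z else 0) =
      x + y + z := by
  have h₁ : (1 : ZMod n) ≠ 0 := by
    rw [← Nat.cast_one, ne_eq, ZMod.natCast_eq_zero_iff]
    exact Nat.not_dvd_of_pos_of_lt one_pos (by omega)
  have h₂ : (2 : ZMod n) ≠ 0 := by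
    rw [← Nat.cast_ofNat, ne_eq, ZMod.natCast_eq_zero_iff]
    exact Nat.not_dvd_of_pos_of_lt two_pos (by omega)
  have hsupp : ∀ k ∉ ({m, m - 1, m + 1} : Finset (ZMod n)),
      (if m = k then x else if m = k + 1 then y else if m = k - 1 then z else 0) = 0 := by
    intro k hk
    simp only [Finset.mem_insert, Finset.mem_singleton, not_or] at hk
    rw [if_neg (Ne.symm hk.1), if_neg fun h => hk.2.1 (by rw [h]; ring),
      if_neg fun h => hk.2.2 (by rw [h]; ring)]
  have d₁ : m ≠ m + 1 := fun h => h₁ (by linear_combination -h)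
  have d₂ : m ≠ m - 1 := fun h => h₁ (by linear_combination h)
  have d₃ : m - 1 ≠ m + 1 := fun h => h₂ (by linear_combination -h)
  rw [← Finset.sum_subset (Finset.subset_univ _) fun k _ hk => hsupp k hk,
    Finset.sum_insert (by simp [d₁, d₂]), Finset.sum_insert (by simp [d₃]), Finset.sum_singleton]
  simp [d₁, d₂, one_add_one_eq_two, h₂, add_assoc]

section BorderedCirculant

variable {R p q : Type*} (n : ℕ)

def borderedCirculant [Zero R] (a : R) (r : q → R) (c : p → R) (B₀ B₁ B₂ : Matrix p q R) :
    Matrix (Unit ⊕ ZMod n × p) (Unit ⊕ ZMod n × q) R :=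
  Matrix.of fun
    | Sum.inl _, Sum.inl _ => a
    | Sum.inl _, Sum.inr (_, j) => r j
    | Sum.inr (_, i), Sum.inl _ => c i
    | Sum.inr (k, i), Sum.inr (m, j) =>
        if m = k then B₀ i j else if m = k + 1 then B₁ i j else if m = k - 1 then B₂ i j else 0

def borderedCirculantReduced [Semiring R] (a : R) (r : q → R) (c : p → R)
    (B₀ B₁ B₂ : Matrix p q R) : Matrix (Unit ⊕ p) (Unit ⊕ q) R :=
  fromBlocks (of fun _ _ => a) (of fun _ j => r j) (of fun i _ => n * c i) (B₀ + B₁ + B₂)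

def sectorwise (x : Unit ⊕ p → R) : Unit ⊕ ZMod n × p → R :=
  x ∘ Sum.map id Prod.snd

theorem sectorwise_single_inl [Zero R] [DecidableEq p] (b : R) :
    sectorwise n (Pi.single (Sum.inl ()) b : Unit ⊕ p → R) = Pi.single (Sum.inl ()) b := by
  ext (_ | _) <;> simp [sectorwise]

theorem sectorwise_vecMul_borderedCirculant [CommSemiring R] [Fintype p] [NeZero n] (hn : 3 ≤ n)
    (a : R) (r : q → R) (c : p → R) (B₀ B₁ B₂ : Matrix p q R) (x : Unit ⊕ p → R) :
    sectorwise n x ᵥ* borderedCirculant n a r c B₀ B₁ B₂ =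
      sectorwise n (x ᵥ* borderedCirculantReduced n a r c B₀ B₁ B₂) := by
  ext (_ | ⟨m, j⟩)
  · simp [vecMul, dotProduct, Fintype.sum_sum_type, Fintype.sum_prod_type, sectorwise,
      borderedCirculant, borderedCirculantReduced, Finset.mul_sum, mul_left_comm]
  · simp only [vecMul, dotProduct, Fintype.sum_sum_type, Fintype.sum_prod_type, sectorwise,
      borderedCirculant, Function.comp_apply, Sum.map_inl, Sum.map_inr, of_apply]
    rw [Finset.sum_comm]
    simp only [mul_ite, mul_zero, ZMod.sum_ite_eq_add_add hn]
    simp [borderedCirculantReduced, mul_add, Finset.sum_add_distrib]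

end BorderedCirculant

theorem loopSMat_eq_borderedCirculant (n : ℕ) [NeZero n] (α β : ℝ) :
    loopSMat n α β =
      borderedCirculant n α (fun j => if j = 0 then β else 0) loopSCol0 loopS0 loopS1 loopS2 := by
  ext (_ | _) (_ | _) <;> rfl

theorem loopLMat_eq_borderedCirculant (n : ℕ) [NeZero n] (τ : ℝ) :
    loopLMat n τ =
      borderedCirculant n (1 - n * τ) (fun j => if j = 0 then τ else 0) loopLCol0
        loopL0 loopL1 loopL2 := by
  ext (_ | _) (_ | _) <;> rfl

theorem vecMul_loopL_borderedCirculantReduced (n : ℕ) (τ c w₀ w₁ w₂ : ℝ) :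
    Sum.elim (fun _ => c) ![w₀, w₁, w₂] ᵥ*
        borderedCirculantReduced n (1 - n * τ) (fun j => if j = 0 then τ else 0) loopLCol0
          loopL0 loopL1 loopL2 =
      Sum.elim (fun _ => c * (1 - n * τ) + n * w₀ / 12)
        ![c * τ + (8 * w₀ + w₁ + 2 * w₂) / 12, (w₀ + 6 * w₁ + 2 * w₂) / 12, w₁ / 12,
          (2 * w₀ + 2 * w₁ + 6 * w₂) / 12, (w₁ + w₂) / 12, (w₁ + w₂) / 12] := by
  ext (_ | j)
  · simp only [vecMul, dotProduct, Fintype.sum_sum_type, Fin.sum_univ_succ, Finset.univ_unique,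
      Finset.sum_singleton, borderedCirculantReduced, fromBlocks_apply₁₁, fromBlocks_apply₂₁,
      of_apply, Sum.elim_inl, Sum.elim_inr, Pi.smul_apply, smul_eq_mul, cons_val_zero,
      cons_val_fin_one, cons_val_succ, Fin.isValue, loopLCol0]
    ring
  · fin_cases j <;>
      simp only [vecMul, dotProduct, Fintype.sum_sum_type, Fin.sum_univ_succ, Finset.univ_unique,
        Finset.sum_singleton, borderedCirculantReduced, fromBlocks_apply₁₂, fromBlocks_apply₂₂,
        of_apply, Sum.elim_inl, Sum.elim_inr, Matrix.add_apply, transpose_apply, Matrix.smul_apply,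
        smul_eq_mul, cons_val', cons_val_zero, cons_val_one, cons_val, cons_val_fin_one,
        cons_val_succ, Fin.isValue, Fin.reduceEq, Fin.zero_eta, Fin.mk_one, Fin.reduceFinMk,
        one_ne_zero, ↓reduceIte, loopL0, loopL1, loopL2] <;>
      ring

theorem vecMul_loopS_borderedCirculantReduced (n : ℕ) (α β d v₀ v₁ v₂ v₃ v₄ v₅ : ℝ) :
    Sum.elim (fun _ => d) ![v₀, v₁, v₂, v₃, v₄, v₅] ᵥ*
        borderedCirculantReduced n α (fun j => if j = 0 then β else 0) loopSCol0
          loopS0 loopS1 loopS2 =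
      Sum.elim (fun _ => d * α + n * (6 * v₀ + v₁ + 2 * v₃) / 16)
        ![d * β + (10 * v₀ + 12 * v₁ + 6 * v₂ + 12 * v₃ + 8 * v₄ + 8 * v₅) / 16,
          (v₁ + 6 * v₂ + 2 * v₄ + 2 * v₅) / 16,
          (2 * v₁ + 4 * v₂ + 2 * v₃ + 6 * v₄ + 6 * v₅) / 16] := by
  ext (_ | j)
  · simp only [vecMul, dotProduct, Fintype.sum_sum_type, Fin.sum_univ_succ, Finset.univ_unique,
      Finset.sum_singleton, borderedCirculantReduced, fromBlocks_apply₁₁, fromBlocks_apply₂₁,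
      of_apply, Sum.elim_inl, Sum.elim_inr, Pi.smul_apply, smul_eq_mul, cons_val_zero,
      cons_val_fin_one, cons_val_succ, Fin.isValue, loopSCol0]
    ring
  · fin_cases j <;>
      simp only [vecMul, dotProduct, Fintype.sum_sum_type, Fin.sum_univ_succ, Finset.univ_unique,
        Finset.sum_singleton, borderedCirculantReduced, fromBlocks_apply₁₂, fromBlocks_apply₂₂,
        of_apply, Sum.elim_inl, Sum.elim_inr, Matrix.add_apply, Matrix.smul_apply, smul_eq_mul,
        cons_val', cons_val_zero, cons_val_one, cons_val, cons_val_fin_one, cons_val_succ,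
        Fin.isValue, Fin.reduceEq, Fin.zero_eta, Fin.mk_one, Fin.reduceFinMk, one_ne_zero,
        ↓reduceIte, loopS0, loopS1, loopS2] <;>
      ring

theorem vecMul_loop_borderedCirculantReduced_eq_single (n : ℕ) (α β τ ω₃ : ℝ)
    (hαβ : α + n * β = 1)
    (h1 : 3 + 8 * n * β ≠ 0)
    (h2 : 128 * α^2 + 200 * α - 67 ≠ 0)
    (hτ : τ = 8 * β / (3 + 8 * n * β))
    (hω₃ : ω₃ = -48 * β / (128 * α^2 + 200 * α - 67)) :
    Sum.elim (fun _ => 1 - 25 * n * ω₃) ![32 * ω₃, ω₃, -8 * ω₃] ᵥ*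
        borderedCirculantReduced n (1 - n * τ) (fun j => if j = 0 then τ else 0) loopLCol0
          loopL0 loopL1 loopL2 ᵥ*
        borderedCirculantReduced n α (fun j => if j = 0 then β else 0) loopSCol0
          loopS0 loopS1 loopS2 =
      Pi.single (Sum.inl ()) 1 := by
  obtain rfl : α = 1 - n * β := by linarith
  -- as atoms, the denominators are not rewritten by `field_simp` into forms it cannot see are `≠ 0`
  generalize hE : 3 + 8 * n * β = E at h1 hτ
  generalize hD : 128 * (1 - n * β) ^ 2 + 200 * (1 - n * β) - 67 = D at h2 hω₃
  subst hτ hω₃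
  rw [vecMul_loopL_borderedCirculantReduced, vecMul_loopS_borderedCirculantReduced]
  ext (_ | j)
  · rw [Sum.elim_inl, Pi.single_eq_same]
    field_simp
    subst hD hE
    ring
  · rw [Sum.elim_inr, Pi.single_eq_of_ne Sum.inr_ne_inl]
    fin_cases j <;> simp only [Fin.isValue, Fin.zero_eta, Fin.mk_one, Fin.reduceFinMk, cons_val] <;>
      field_simp <;> subst hD hE <;> ring

/-- The quasi-interpolation weight vector of the Loop subdivision at a vertex
of valence `n`: there is a row vector `ω` with center entry `1 - 25 n ω₃`,
whose three entries on each sector are (at the same within-sector positions for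
every sector) the values `32 ω₃`, `ω₃` and `-8 ω₃`, satisfying
`ω * A = e₀` with `A = L * S`. -/
theorem loop_quasi_interpolation_weights
    (n : ℕ) [NeZero n] (hn : 3 ≤ n) (α β τ ω₃ : ℝ)
    (hαβ : α + n * β = 1)
    (h1 : 3 + 8 * n * β ≠ 0)
    (h2 : 128 * α^2 + 200 * α - 67 ≠ 0)
    (hτ : τ = 8 * β / (3 + 8 * n * β))
    (hω₃ : ω₃ = -48 * β / (128 * α^2 + 200 * α - 67)) :
    ∃ ω : (Unit ⊕ ZMod n × Fin 3) → ℝ, ∃ w : Fin 3 → ℝ,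
      ω (Sum.inl ()) = 1 - 25 * n * ω₃ ∧
      (∀ (k : ZMod n) (j : Fin 3), ω (Sum.inr (k, j)) = w j) ∧
      ({w 0, w 1, w 2} : Multiset ℝ) = {32 * ω₃, ω₃, -8 * ω₃} ∧
      ω ᵥ* (loopLMat n τ * loopSMat n α β) = Pi.single (Sum.inl ()) 1 := by
  refine ⟨sectorwise n (Sum.elim (fun _ => 1 - 25 * n * ω₃) ![32 * ω₃, ω₃, -8 * ω₃]),
    ![32 * ω₃, ω₃, -8 * ω₃], rfl, fun _ _ => rfl, rfl, ?_⟩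
  rw [← vecMul_vecMul, loopLMat_eq_borderedCirculant, loopSMat_eq_borderedCirculant,
    sectorwise_vecMul_borderedCirculant n hn, sectorwise_vecMul_borderedCirculant n hn,
    vecMul_loop_borderedCirculantReduced_eq_single n α β τ ω₃ hαβ h1 h2 hτ hω₃,
    sectorwise_single_inl]

end
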